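/- arXiv:1009.4209 — 2 statements merged into one kernel-verified Lean document; each statement's English description precedes it below -/
import Mathlib

section
/- Every solution (X,Y,Z,W) in non-negative integers of the equation -X + Y - bZ + W = 0 (where b is a positive integer) can be written as a linear combination with non-negative integer coefficients of the vectors (1,1,0,0), (1,0,0,1), and (0,b-k,1,k) for 0 ≤ k ≤ b. -/
theorem Finset.sum_add_single_mul {ι R : Type*} [DecidableEq ι] [NonAssocSemiring R]
    {s : Finset ι} {k : ι} (hk : k ∈ s) (c f : ι → R) :
    ∑ j ∈ s, (c + Pi.single k 1 : ι → R) j * f j = ∑ j ∈ s, c j * f j + f k := by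
  simp only [Pi.add_apply, add_mul, Finset.sum_add_distrib, Pi.single_apply, ite_mul, one_mul,
    zero_mul, Finset.sum_ite_eq', if_pos hk]

def IsGeneratedSolution (b X Y Z W : ℕ) : Prop :=
  ∃ (c₁ c₂ : ℕ) (c : ℕ → ℕ),
    X = c₁ * 1 + c₂ * 1 + ∑ k ∈ Finset.range (b + 1), c k * 0 ∧
    Y = c₁ * 1 + c₂ * 0 + ∑ k ∈ Finset.range (b + 1), c k * (b - k) ∧
    Z = c₁ * 0 + c₂ * 0 + ∑ k ∈ Finset.range (b + 1), c k * 1 ∧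
    W = c₁ * 0 + c₂ * 1 + ∑ k ∈ Finset.range (b + 1), c k * k

namespace IsGeneratedSolution

theorem of_eq_add (b : ℕ) {X Y W : ℕ} (h : X = Y + W) : IsGeneratedSolution b X Y 0 W :=
  ⟨Y, W, 0, by simp [h]⟩

theorem add_generator {b X Y Z W k : ℕ} (hgen : IsGeneratedSolution b X Y Z W) (hk : k ≤ b) :
    IsGeneratedSolution b X (Y + (b - k)) (Z + 1) (W + k) := by
  obtain ⟨c₁, c₂, c, hX, hY, hZ, hW⟩ := hgen
  have hk' : k ∈ Finset.range (b + 1) := Finset.mem_range_succ_iff.mpr hk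
  refine ⟨c₁, c₂, c + Pi.single k 1, ?_, ?_, ?_, ?_⟩ <;>
    rw [Finset.sum_add_single_mul hk'] <;> omega

/-- Peel off one generator `(0, b - k, 1, k)` with `k = min W b`, which keeps
both `Y` and `W` non-negative. -/
theorem of_add_mul_eq (b Z : ℕ) : ∀ {X Y W : ℕ}, X + b * Z = Y + W →
    IsGeneratedSolution b X Y Z W := by
  induction Z with
  | zero => intro X Y W h; exact of_eq_add b (by simpa using h)
  | succ Z ih =>
    intro X Y W h
    rw [Nat.mul_succ] at h
    have hgen := add_generator (ih (X := X) (Y := Y - (b - min W b)) (W := W - min W b)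
      (by omega)) (min_le_right W b)
    rwa [Nat.sub_add_cancel (by omega), Nat.sub_add_cancel (min_le_left W b)] at hgen

end IsGeneratedSolution

theorem solutions_generated_general (b : ℕ) (X Y Z W : ℕ)
    (h : -(X : ℤ) + (Y : ℤ) - (b : ℤ) * (Z : ℤ) + (W : ℤ) = 0) :
    ∃ (c₁ c₂ : ℕ) (c : ℕ → ℕ),
      X = c₁ * 1 + c₂ * 1 + ∑ k ∈ Finset.range (b + 1), c k * 0 ∧
      Y = c₁ * 1 + c₂ * 0 + ∑ k ∈ Finset.range (b + 1), c k * (b - k) ∧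
      Z = c₁ * 0 + c₂ * 0 + ∑ k ∈ Finset.range (b + 1), c k * 1 ∧
      W = c₁ * 0 + c₂ * 1 + ∑ k ∈ Finset.range (b + 1), c k * k :=
  IsGeneratedSolution.of_add_mul_eq b Z (by omega)

/-- Every non-negative integer solution of -X + Y - bZ + W = 0 is a non-negative
integer combination of (1,1,0,0), (1,0,0,1) and (0,b-k,1,k) for 0 ≤ k ≤ b. -/
theorem solutions_generated (b : ℕ) (hb : 0 < b) (X Y Z W : ℕ)
    (h : -(X : ℤ) + (Y : ℤ) - (b : ℤ) * (Z : ℤ) + (W : ℤ) = 0) :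
    ∃ (c₁ c₂ : ℕ) (c : ℕ → ℕ),
      X = c₁ * 1 + c₂ * 1 + ∑ k ∈ Finset.range (b + 1), c k * 0 ∧
      Y = c₁ * 1 + c₂ * 0 + ∑ k ∈ Finset.range (b + 1), c k * (b - k) ∧
      Z = c₁ * 0 + c₂ * 0 + ∑ k ∈ Finset.range (b + 1), c k * 1 ∧
      W = c₁ * 0 + c₂ * 1 + ∑ k ∈ Finset.range (b + 1), c k * k :=
  solutions_generated_general b X Y Z W h
end

section
/- The derivation δ with δ(a₁) = b a₂^{b-1}a₃, δ(a₂) = a₄, δ(a₃) = δ(a₄) = 0 satisfies δ²(x_{b-1}) = 0 and δ(x_b) = 0, where x_j = a₂^{b-j}a₃a₄^j. -/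
/-! Since δ sends a₂ to a₄ and kills a₃ and a₄, it shifts the family x_k along itself:
δ(x_k) = (b - k) x_{k+1}. The coefficient vanishes once k ≥ b, so δ(x_b) = 0, and δ²(x_{b-1}) is a
multiple of δ(x_b) = 0. -/

open MvPolynomial

/-- The derivation δ with δ(a₁) = b a₂^{b-1} a₃, δ(a₂) = a₄, δ(a₃) = δ(a₄) = 0. -/
noncomputable def deltaDer (b : ℕ) :
    Derivation ℂ (MvPolynomial (Fin 4) ℂ) (MvPolynomial (Fin 4) ℂ) :=
  MvPolynomial.mkDerivation ℂ
    ![(b : MvPolynomial (Fin 4) ℂ) * X 1 ^ (b - 1) * X 2, X 3, 0, 0]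

/-- x_k = a₂^{b-k} a₃ a₄^k. -/
noncomputable def xMon (b k : ℕ) : MvPolynomial (Fin 4) ℂ :=
  X 1 ^ (b - k) * X 2 * X 3 ^ k

section

variable (b : ℕ)

@[simp]
lemma deltaDer_X_one : deltaDer b (X 1) = X 3 := by
  simp [deltaDer, mkDerivation_X]

@[simp]
lemma deltaDer_X_two : deltaDer b (X 2) = 0 := by
  simp [deltaDer, mkDerivation_X]

@[simp]
lemma deltaDer_X_three : deltaDer b (X 3) = 0 := by
  simp [deltaDer, mkDerivation_X]

lemma deltaDer_xMon (k : ℕ) : deltaDer b (xMon b k) = (b - k) • xMon b (k + 1) := by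
  rcases le_or_gt b k with hbk | hkb
  · simp [xMon, Derivation.leibniz, Derivation.leibniz_pow, Nat.sub_eq_zero_of_le hbk]
  · obtain ⟨m, hm⟩ : ∃ m, b - k = m + 1 := ⟨b - k - 1, by omega⟩
    have hm' : b - (k + 1) = m := by omega
    simp only [xMon, hm, hm', Derivation.leibniz, Derivation.leibniz_pow, deltaDer_X_one,
      deltaDer_X_two, deltaDer_X_three, add_tsub_cancel_right, nsmul_eq_mul,
      smul_eq_mul]
    push_cast
    ring

lemma deltaDer_xMon_of_le {k : ℕ} (hbk : b ≤ k) : deltaDer b (xMon b k) = 0 := by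
  rw [deltaDer_xMon, Nat.sub_eq_zero_of_le hbk, zero_smul]

end

theorem deltaDer_sq_x_general (b : ℕ) :
    deltaDer b (deltaDer b (xMon b (b - 1))) = 0 ∧ deltaDer b (xMon b b) = 0 := by
  refine ⟨?_, deltaDer_xMon_of_le b le_rfl⟩
  rw [deltaDer_xMon, map_nsmul, deltaDer_xMon_of_le b (by omega), smul_zero]

theorem deltaDer_sq_x (b : ℕ) (hb : 1 ≤ b) :
    deltaDer b (deltaDer b (xMon b (b - 1))) = 0 ∧ deltaDer b (xMon b b) = 0 :=
  deltaDer_sq_x_general b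
end
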